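/- Let M be a mean on an interval I ⊂ ℝ₊ with inf I = 0. If there exists a sequence (a_n) in I with ∑ a_n = +∞ and M(a_1,...,a_n)/a_n → +∞, then M is not a Hardy mean: for every finite constant K there exists a summable sequence (b_n) in I with ∑_{n=1}^∞ M(b_1,...,b_n) > K ∑_{n=1}^∞ b_n. -/
import Mathlib


/-- A mean on a set `I`: `M n v` is the value on the `(n+1)`-tuple `v`, and
`min v ≤ M v ≤ max v` for every tuple with entries in `I`. -/
def IsMeanOn (I : Set ℝ) (M : ∀ n : ℕ, (Fin (n+1) → ℝ) → ℝ) : Prop :=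
  ∀ (n : ℕ) (v : Fin (n+1) → ℝ), (∀ i, v i ∈ I) →
    Finset.univ.inf' Finset.univ_nonempty v ≤ M n v ∧
    M n v ≤ Finset.univ.sup' Finset.univ_nonempty v

/-- let `I ⊆ (0,∞)` be an interval with `inf I = 0` and `M` a mean
on `I`.  If some sequence `(a_n)` in `I` satisfies `∑ a_n = ∞` and
`M(a_1,…,a_n)/a_n → ∞`, then `M` is not a Hardy mean: for every real constant `K`
there is a summable sequence `(b_n)` in `I` with
`∑ M(b_1,…,b_n) > K · ∑ b_n`. -/
theorem stmt10 (I : Set ℝ) (hI_pos : ∀ x ∈ I, 0 < x)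
    (hI_interval : I.OrdConnected) (hI_ne : I.Nonempty) (hI_inf : sInf I = 0)
    (M : ∀ n : ℕ, (Fin (n+1) → ℝ) → ℝ) (hM : IsMeanOn I M)
    (a : ℕ → ℝ) (ha_mem : ∀ n, a n ∈ I)
    (ha_div : ∑' n, ENNReal.ofReal (a n) = ⊤)
    (hc : Filter.Tendsto (fun n => M n (fun i => a i.1) / a n) Filter.atTop Filter.atTop) :
    ∀ K : ℝ, ∃ b : ℕ → ℝ, (∀ n, b n ∈ I) ∧ (∑' n, ENNReal.ofReal (b n)) ≠ ⊤ ∧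
      ENNReal.ofReal K * (∑' n, ENNReal.ofReal (b n))
        < ∑' n, ENNReal.ofReal (M n (fun i => b i.1)) := by
  intro K
  obtain ⟨x₀, hx₀⟩ := hI_ne
  have hx₀pos : 0 < x₀ := hI_pos _ hx₀
  have ha_pos : ∀ n, 0 < a n := fun n => hI_pos _ (ha_mem n)
  have hmem : ∀ t : ℝ, 0 < t → t ≤ x₀ → t ∈ I := by
    intro t ht htx
    by_cases h : ∃ z ∈ I, z < t
    · obtain ⟨z, hz, hzt⟩ := h
      exact hI_interval.out hz hx₀ ⟨hzt.le, htx⟩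
    · push_neg at h
      have : t ≤ sInf I := le_csInf ⟨x₀, hx₀⟩ h
      rw [hI_inf] at this; linarith
  set K₀ : ℝ := max K 0 with hK₀def
  have hK₀0 : 0 ≤ K₀ := le_max_right _ _
  set K' : ℝ := K₀ + 1 with hK'def
  have hK' : 0 < K' := by positivity
  -- threshold N
  obtain ⟨N, hN⟩ := Filter.eventually_atTop.mp (hc.eventually_ge_atTop K')
  have hMa : ∀ m, N ≤ m → K' * a m ≤ M m (fun i => a i.1) := by
    intro m hm
    have := hN m hm
    exact (le_div_iff₀ (ha_pos m)).mp this
  -- divergence of partial sums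
  have hnotsum : ¬ Summable a := by
    intro h
    have h2 := ENNReal.ofReal_tsum_of_nonneg (fun n => (ha_pos n).le) h
    rw [← h2] at ha_div
    exact ENNReal.ofReal_ne_top ha_div
  have hS : Filter.Tendsto (fun k => ∑ i ∈ Finset.range k, a i) Filter.atTop Filter.atTop :=
    (not_summable_iff_tendsto_nat_atTop_of_nonneg (fun n => (ha_pos n).le)).mp hnotsum
  obtain ⟨m, hm1, hm2⟩ : ∃ m, N + 1 ≤ m ∧
      K' * (∑ i ∈ Finset.range N, a i) + 2 * K₀ < ∑ i ∈ Finset.range m, a i := by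
    have h1 := hS.eventually_gt_atTop (K' * (∑ i ∈ Finset.range N, a i) + 2 * K₀)
    obtain ⟨m, hm⟩ := (h1.and (Filter.eventually_ge_atTop (N + 1))).exists
    exact ⟨m, hm.2, hm.1⟩
  obtain ⟨n, rfl⟩ : ∃ n, m = n + 1 := ⟨m - 1, by omega⟩
  have hNn : N ≤ n := by omega
  -- the sequence b
  set b : ℕ → ℝ := fun i => if i ≤ n then a i else min x₀ ((1/2 : ℝ) ^ i) with hbdef
  have hbpos : ∀ i, 0 < b i := by
    intro i
    simp only [hbdef]
    split
    · exact ha_pos i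
    · exact lt_min hx₀pos (by positivity)
  have hbI : ∀ i, b i ∈ I := by
    intro i
    simp only [hbdef]
    split
    · exact ha_mem i
    · exact hmem _ (lt_min hx₀pos (by positivity)) (min_le_left _ _)
  have hgeo : Summable (fun i : ℕ => (1/2 : ℝ) ^ i) :=
    summable_geometric_of_lt_one (by norm_num) (by norm_num)
  have hsum_b : Summable b := by
    rw [← summable_nat_add_iff (n+1)]
    refine Summable.of_nonneg_of_le (fun i => (hbpos _).le) (fun i => ?_)
      ((summable_nat_add_iff (n+1)).mpr hgeo)
    have hni : ¬ (i + (n+1) ≤ n) := by omega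
    simp only [hbdef, hni, if_false]
    exact min_le_right _ _
  have htail : ∑' i, b (i + (n+1)) ≤ 2 := by
    have h1 : ∑' i, b (i + (n+1)) ≤ ∑' i : ℕ, (1/2 : ℝ) ^ i := by
      refine Summable.tsum_le_tsum (fun i => ?_) ((summable_nat_add_iff _).mpr hsum_b) hgeo
      have hni : ¬ (i + (n+1) ≤ n) := by omega
      simp only [hbdef, hni, if_false]
      calc min x₀ ((1/2 : ℝ) ^ (i + (n+1))) ≤ (1/2 : ℝ) ^ (i + (n+1)) := min_le_right _ _
        _ ≤ (1/2 : ℝ) ^ i := pow_le_pow_of_le_one (by norm_num) (by norm_num) (by omega)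
    rw [tsum_geometric_of_lt_one (by norm_num) (by norm_num)] at h1
    norm_num at h1
    linarith
  have hpart : ∑ i ∈ Finset.range (n+1), b i = ∑ i ∈ Finset.range (n+1), a i := by
    refine Finset.sum_congr rfl (fun i hi => ?_)
    have : i ≤ n := Nat.lt_succ_iff.mp (Finset.mem_range.mp hi)
    simp [hbdef, this]
  have hT : ∑' i, b i ≤ (∑ i ∈ Finset.range (n+1), a i) + 2 := by
    rw [← Summable.sum_add_tsum_nat_add (n+1) hsum_b, hpart]
    linarith
  have hTnn : 0 ≤ ∑' i, b i := tsum_nonneg (fun i => (hbpos i).le)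
  -- M values of b
  have hMb_eq : ∀ m, m ≤ n →
      M m (fun i : Fin (m+1) => b i.1) = M m (fun i => a i.1) := by
    intro m hm
    congr 1
    funext i
    have hi : i.1 ≤ n := le_trans (Nat.lt_succ_iff.mp i.2) hm
    simp [hbdef, hi]
  have hMb_pos : ∀ m, 0 < M m (fun i : Fin (m+1) => b i.1) := by
    intro m
    have h := (hM m _ (fun i => hbI i.1)).1
    have h2 : (0:ℝ) < Finset.univ.inf' Finset.univ_nonempty (fun i : Fin (m+1) => b i.1) :=
      (Finset.lt_inf'_iff _).mpr (fun i _ => hbpos i.1)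
    linarith
  set Sg : ℝ := ∑ m ∈ Finset.range (n+1), M m (fun i : Fin (m+1) => b i.1) with hSgdef
  have hSg1 : K' * ((∑ i ∈ Finset.range (n+1), a i) - ∑ i ∈ Finset.range N, a i) ≤ Sg := by
    have hsub : Finset.Ico N (n+1) ⊆ Finset.range (n+1) := by
      intro x hx
      simp only [Finset.mem_Ico] at hx
      exact Finset.mem_range.mpr hx.2
    have h1 : ∑ m ∈ Finset.Ico N (n+1), M m (fun i : Fin (m+1) => b i.1) ≤ Sg :=
      Finset.sum_le_sum_of_subset_of_nonneg hsub (fun i _ _ => (hMb_pos i).le)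
    have h2 : K' * ((∑ i ∈ Finset.range (n+1), a i) - ∑ i ∈ Finset.range N, a i)
        ≤ ∑ m ∈ Finset.Ico N (n+1), M m (fun i : Fin (m+1) => b i.1) := by
      rw [← Finset.sum_Ico_eq_sub _ (by omega : N ≤ n + 1), Finset.mul_sum]
      refine Finset.sum_le_sum (fun m hm => ?_)
      obtain ⟨hma, hmb⟩ := Finset.mem_Ico.mp hm
      rw [hMb_eq m (by omega)]
      exact hMa m hma
    linarith
  have hKT : K₀ * (∑' i, b i) < Sg := by
    have h3 : K₀ * (∑' i, b i) ≤ K₀ * ((∑ i ∈ Finset.range (n+1), a i) + 2) :=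
      mul_le_mul_of_nonneg_left hT hK₀0
    nlinarith [hm2, hSg1, h3, hK₀0]
  have hSgpos : 0 < Sg := lt_of_le_of_lt (mul_nonneg hK₀0 hTnn) hKT
  refine ⟨b, hbI, ?_, ?_⟩
  · rw [← ENNReal.ofReal_tsum_of_nonneg (fun i => (hbpos i).le) hsum_b]
    exact ENNReal.ofReal_ne_top
  · rw [← ENNReal.ofReal_tsum_of_nonneg (fun i => (hbpos i).le) hsum_b]
    calc ENNReal.ofReal K * ENNReal.ofReal (∑' i, b i)
        ≤ ENNReal.ofReal K₀ * ENNReal.ofReal (∑' i, b i) := by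
          gcongr
          exact le_max_left _ _
      _ = ENNReal.ofReal (K₀ * ∑' i, b i) := (ENNReal.ofReal_mul hK₀0).symm
      _ < ENNReal.ofReal Sg := (ENNReal.ofReal_lt_ofReal_iff hSgpos).mpr hKT
      _ = ∑ m ∈ Finset.range (n+1), ENNReal.ofReal (M m (fun i : Fin (m+1) => b i.1)) :=
          ENNReal.ofReal_sum_of_nonneg (fun m _ => (hMb_pos m).le)
      _ ≤ ∑' m, ENNReal.ofReal (M m (fun i : Fin (m+1) => b i.1)) := ENNReal.sum_le_tsum _
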